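/- Let {K_n} be a Kangaroo recurrence with ℓ hops of length g. For every i ≥ 1, the number of index sets S ⊆ {1, …, i} with i ∈ S such that Σ_{r∈S} K_r is a legal decomposition equals K_{i+1} − K_i; equivalently, the positive integers whose legal decomposition has largest summand K_i are exactly the integers in the interval [K_i, K_{i+1}). -/

import Mathlib

/-- The coefficients of a Kangaroo recurrence with `ℓ` hops of length `g`:
`c i = 1` for `i = 1, g+1, 2g+1, …, ℓg+1` and `c i = 0` otherwise. -/
def kanC (g ℓ : ℕ) (i : ℕ) : ℕ :=
  if 1 ≤ i ∧ i ≤ ℓ * g + 1 ∧ i % g = 1 % g then 1 else 0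

/-- Legality of a coefficient sequence `a_1, …, a_m` (encoded as a list) with respect to a
positive linear recurrence with coefficients `c_1, …, c_L`. -/
inductive IsLegal (L : ℕ) (c : ℕ → ℕ) : List ℕ → Prop
  | short (m : ℕ) (h : m < L) :
      IsLegal L c ((List.range m).map fun i => c (i + 1))
  | long (s t : ℕ) (a : ℕ) (rest : List ℕ)
      (hs1 : 1 ≤ s) (hsL : s ≤ L) (ha : a < c s)
      (hrest : IsLegal L c rest) :
      IsLegal L c
        (((List.range (s - 1)).map fun i => c (i + 1)) ++ a :: (List.replicate t 0 ++ rest))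

/-- The indicator list `a_1, …, a_m` of a set `S` of indices, where `a_j = 1` iff
`m + 1 - j ∈ S` (so the list entry `a_1` corresponds to the largest index `m`). -/
def indList (m : ℕ) (S : Finset ℕ) : List ℕ :=
  (List.range m).map fun j => if m - j ∈ S then 1 else 0

/-- A finite set `S` of indices is legal if all its elements are `≥ 1` and, when `S` is
nonempty, the indicator coefficient list (of length the maximum of `S`) is legal. -/
def IsLegalSet (L : ℕ) (c : ℕ → ℕ) (S : Finset ℕ) : Prop :=
  (∀ i ∈ S, 1 ≤ i) ∧ (S.Nonempty → IsLegal L c (indList (S.sup id) S))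

/-!
A legal 0/1 list either is a full block `c_1, …, c_n` of coefficients with `n < L`, or it is a
block `c_1, …, c_k` followed by a `0` in a place where `c_{k+1} = 1` and then by an arbitrary
legal list. On index sets in `{1, …, n}` this splits the legal sets into the single full block
(of value `B_n` when `n < L`) and, for each `k` with `c_{k+1} = 1`, a copy of the legal sets in
`{1, …, n - k - 1}` shifted in value by `B_k = ∑_{r < k} c_{r+1} K_{n-r}`. Since
`K_{n+1} = B_{min n L} + [n < L]`, by induction there are at most `K_{n+1}` legal sets in
`{1, …, n}`, and every `N < K_{n+1}` is the value of one of them (pick `k` with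
`B_k ≤ N < B_{k+1}`). So `S ↦ ∑_{x ∈ S} K_x` is a bijection from the legal sets in `{1, …, n}`
onto `[0, K_{n+1})`, and the legal sets with top `i` are those in `{1, …, i}` that do not lie
in `{1, …, i - 1}`.
-/

open Finset

variable {L : ℕ} {c : ℕ → ℕ}

/-- `K_{n+1} = c_1 K_n + ⋯ + c_{min(n,L)} K_{n+1-min(n,L)} + [n < L]`: for `n ≥ L` the
recurrence, for `n < L` the rule defining the initial terms (so `K_1 = 1` when `1 ≤ L`). -/
def IsPLRS (L : ℕ) (c K : ℕ → ℕ) : Prop :=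
  ∀ n, K (n + 1) = ∑ r ∈ range (min n L), c (r + 1) * K (n - r) + if n < L then 1 else 0

def coeffPrefix (c : ℕ → ℕ) (k : ℕ) : List ℕ := (List.range k).map fun i => c (i + 1)

theorem IsLegal.replicate_zero_append (hL : 1 ≤ L) (hc1 : 0 < c 1) (k : ℕ) {l : List ℕ}
    (h : IsLegal L c l) : IsLegal L c (List.replicate k 0 ++ l) := by
  induction k with
  | zero => simpa using h
  | succ k ih => simpa [List.replicate_succ] using IsLegal.long 1 0 0 _ le_rfl hL hc1 ih

theorem IsLegal.eq_coeffPrefix_or_exists (hc : ∀ r, c r ≤ 1) (hc1 : 0 < c 1) {l : List ℕ}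
    (h : IsLegal L c l) :
    (l.length < L ∧ l = coeffPrefix c l.length) ∨
      ∃ k < L, c (k + 1) = 1 ∧ ∃ l', IsLegal L c l' ∧ l = coeffPrefix c k ++ 0 :: l' := by
  cases h with
  | short m hm => exact Or.inl ⟨by simpa using hm, by simp [coeffPrefix]⟩
  | long s t a rest hs1 hsL ha hrest =>
    have hcs : c s = 1 := by have := hc s; omega
    obtain rfl : a = 0 := by omega
    refine Or.inr ⟨s - 1, by omega, by rwa [Nat.sub_add_cancel hs1], _,
      hrest.replicate_zero_append (by omega) hc1 t, rfl⟩

theorem isLegal_zero_cons_iff (hL : 1 ≤ L) (hc : ∀ r, c r ≤ 1) (hc1 : c 1 = 1)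
    {l : List ℕ} :
    IsLegal L c (0 :: l) ↔ IsLegal L c l := by
  refine ⟨fun h => ?_, fun h => by simpa using h.replicate_zero_append hL (by omega) 1⟩
  rcases h.eq_coeffPrefix_or_exists hc (by omega) with ⟨-, hl⟩ | ⟨k, -, -, l', hl', hl⟩
  · simp [coeffPrefix, List.range_succ_eq_map, hc1] at hl
  · cases k with
    | zero =>
      obtain rfl : l = l' := by simpa [coeffPrefix] using hl
      exact hl'
    | succ k => simp [coeffPrefix, List.range_succ_eq_map, hc1] at hl

theorem isLegal_replicate_zero_append_iff (hL : 1 ≤ L) (hc : ∀ r, c r ≤ 1) (hc1 : c 1 = 1)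
    (k : ℕ) {l : List ℕ} : IsLegal L c (List.replicate k 0 ++ l) ↔ IsLegal L c l := by
  induction k with
  | zero => simp
  | succ k ih => rw [List.replicate_succ, List.cons_append, isLegal_zero_cons_iff hL hc hc1, ih]

theorem indList_length (m : ℕ) (S : Finset ℕ) : (indList m S).length = m := by
  simp [indList]

theorem indList_add (m k : ℕ) (S : Finset ℕ) :
    indList (m + k) S =
      (List.range k).map (fun r => if m + k - r ∈ S then 1 else 0) ++ indList m S := by
  unfold indList
  rw [Nat.add_comm m k, List.range_add, List.map_append, List.map_map]
  congr 1
  refine List.map_congr_left fun j _ => ?_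
  simp [show k + m - (k + j) = m - j by omega]

theorem indList_succ (m : ℕ) (S : Finset ℕ) :
    indList (m + 1) S = (if m + 1 ∈ S then 1 else 0) :: indList m S := by
  simpa using indList_add m 1 S

theorem indList_congr {m : ℕ} {S T : Finset ℕ} (h : ∀ x ∈ Icc 1 m, x ∈ S ↔ x ∈ T) :
    indList m S = indList m T := by
  unfold indList
  refine List.map_congr_left fun j hj => ?_
  rw [List.mem_range] at hj
  simp only [h (m - j) (mem_Icc.mpr ⟨by omega, by omega⟩)]

theorem mem_iff_mem_of_indList_eq {m : ℕ} {S T : Finset ℕ} (h : indList m S = indList m T) :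
    ∀ x ∈ Icc 1 m, x ∈ S ↔ x ∈ T := by
  induction m with
  | zero => simp
  | succ m ih =>
    rw [indList_succ, indList_succ, List.cons.injEq] at h
    intro x hx
    obtain ⟨hx1, hxm⟩ := mem_Icc.mp hx
    rcases hxm.lt_or_eq with hlt | rfl
    · exact ih h.2 x (mem_Icc.mpr ⟨hx1, by omega⟩)
    · by_cases hS : m + 1 ∈ S <;> by_cases hT : m + 1 ∈ T <;> simp_all

theorem indList_injOn (m : ℕ) : Set.InjOn (indList m) {S | S ⊆ Icc 1 m} := by
  intro S hS T hT h
  ext x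
  by_cases hx : x ∈ Icc 1 m
  · exact mem_iff_mem_of_indList_eq h x hx
  · exact iff_of_false (fun h' => hx (hS h')) (fun h' => hx (hT h'))

theorem indList_add_eq_replicate_append {m : ℕ} {S : Finset ℕ} (hS : ∀ x ∈ S, x ≤ m)
    (k : ℕ) :
    indList (m + k) S = List.replicate k 0 ++ indList m S := by
  rw [indList_add, ← List.length_range (n := k), ← List.map_const', List.length_range]
  congr 1
  refine List.map_congr_left fun r hr => if_neg fun h => ?_
  have := hS _ h
  rw [List.mem_range] at hr
  omega

theorem isLegalSet_iff_isLegal_indList (hL : 1 ≤ L) (hc : ∀ r, c r ≤ 1) (hc1 : c 1 = 1)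
    {n : ℕ} {S : Finset ℕ} (hS : S ⊆ Icc 1 n) :
    IsLegalSet L c S ↔ IsLegal L c (indList n S) := by
  have hpos : ∀ x ∈ S, 1 ≤ x := fun x hx => (mem_Icc.mp (hS hx)).1
  have htop : S.sup id ≤ n := Finset.sup_le fun x hx => (mem_Icc.mp (hS hx)).2
  rw [← Nat.add_sub_cancel' htop,
    indList_add_eq_replicate_append (fun x hx => le_sup (f := id) hx),
    isLegal_replicate_zero_append_iff hL hc hc1]
  rcases S.eq_empty_or_nonempty with rfl | hne
  · simpa [IsLegalSet, indList] using IsLegal.short (c := c) 0 hL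
  · exact ⟨fun h => h.2 hne, fun h => ⟨hpos, fun _ => h⟩⟩

def prefixSet (c : ℕ → ℕ) (n k : ℕ) : Finset ℕ :=
  ((range k).filter fun r => c (r + 1) = 1).image (n - ·)

theorem mem_prefixSet {n k x : ℕ} :
    x ∈ prefixSet c n k ↔ ∃ r < k, c (r + 1) = 1 ∧ n - r = x := by
  simp [prefixSet, and_assoc]

theorem prefixSet_subset {n k : ℕ} (hk : k ≤ n) : prefixSet c n k ⊆ Ioc (n - k) n := by
  intro x hx
  obtain ⟨r, hr, -, rfl⟩ := mem_prefixSet.mp hx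
  rw [mem_Ioc]
  omega

theorem prefixSet_union_subset {m k : ℕ} {S : Finset ℕ} (hS : S ⊆ Icc 1 m) :
    prefixSet c (m + k) k ∪ S ⊆ Icc 1 (m + k) := by
  refine union_subset (fun x hx => ?_) (hS.trans (Icc_subset_Icc_right (Nat.le_add_right m k)))
  have := mem_Ioc.mp (prefixSet_subset (Nat.le_add_left k m) hx)
  rw [mem_Icc]
  omega

theorem prefixSet_self_subset (n : ℕ) : prefixSet c n n ⊆ Icc 1 n := by
  simpa using prefixSet_union_subset (c := c) (k := n) (empty_subset (Icc 1 0))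

theorem indList_prefixSet_union (hc : ∀ r, c r ≤ 1) {m k : ℕ} {S : Finset ℕ}
    (hS : S ⊆ Icc 1 m) :
    indList (m + k) (prefixSet c (m + k) k ∪ S) = coeffPrefix c k ++ indList m S := by
  have hP := prefixSet_subset (c := c) (Nat.le_add_left k m)
  rw [indList_add, coeffPrefix]
  congr 1
  · refine List.map_congr_left fun r hr => ?_
    rw [List.mem_range] at hr
    have hrS : m + k - r ∉ S := fun h => by have := mem_Icc.mp (hS h); omega
    have hrP : m + k - r ∈ prefixSet c (m + k) k ↔ c (r + 1) = 1 := by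
      rw [mem_prefixSet]
      refine ⟨fun ⟨r', hr', hcr', he⟩ => ?_, fun h => ⟨r, hr, h, rfl⟩⟩
      obtain rfl : r' = r := by omega
      exact hcr'
    have := hc (r + 1)
    simp only [mem_union, hrP, hrS, or_false]
    split_ifs <;> omega
  · refine indList_congr fun x hx => ?_
    have : x ∉ prefixSet c (m + k) k := fun h => by
      have := mem_Ioc.mp (hP h); have := mem_Icc.mp hx; omega
    simp [this]

theorem indList_prefixSet_self (hc : ∀ r, c r ≤ 1) (n : ℕ) :
    indList n (prefixSet c n n) = coeffPrefix c n := by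
  have := indList_prefixSet_union hc (m := 0) (k := n) (empty_subset (Icc 1 0))
  rwa [zero_add, union_empty, show indList 0 ∅ = [] from rfl, List.append_nil] at this

theorem sum_prefixSet_union (K : ℕ → ℕ) (hc : ∀ r, c r ≤ 1) {m k : ℕ} {S : Finset ℕ}
    (hS : S ⊆ Icc 1 m) :
    ∑ x ∈ prefixSet c (m + k) k ∪ S, K x =
      ∑ r ∈ range k, c (r + 1) * K (m + k - r) + ∑ x ∈ S, K x := by
  have hdisj : Disjoint (prefixSet c (m + k) k) S := disjoint_left.mpr fun x hP hxS => by
    have := mem_Ioc.mp (prefixSet_subset (Nat.le_add_left k m) hP)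
    have := mem_Icc.mp (hS hxS)
    omega
  have hinj : Set.InjOn (m + k - ·) ((range k).filter fun r => c (r + 1) = 1) :=
    fun a ha b hb h => by
      have := (mem_filter.mp ha).1; have := (mem_filter.mp hb).1
      simp only [mem_range] at *
      omega
  rw [sum_union hdisj, prefixSet, sum_image hinj, sum_filter]
  congr 1
  refine sum_congr rfl fun r _ => ?_
  have := hc (r + 1)
  split_ifs with h
  · rw [h, one_mul]
  · rw [show c (r + 1) = 0 by omega, zero_mul]

open Classical in
noncomputable def legalSets (L : ℕ) (c : ℕ → ℕ) (n : ℕ) : Finset (Finset ℕ) :=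
  (Icc 1 n).powerset.filter (IsLegalSet L c)

theorem mem_legalSets {n : ℕ} {S : Finset ℕ} :
    S ∈ legalSets L c n ↔ S ⊆ Icc 1 n ∧ IsLegalSet L c S := by
  simp [legalSets]

theorem legalSets_mono {m n : ℕ} (h : m ≤ n) : legalSets L c m ⊆ legalSets L c n := by
  intro S hS
  rw [mem_legalSets] at hS ⊢
  exact ⟨hS.1.trans (Icc_subset_Icc_right h), hS.2⟩

theorem prefixSet_mem_legalSets (hL : 1 ≤ L) (hc : ∀ r, c r ≤ 1) (hc1 : c 1 = 1) {n : ℕ}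
    (hn : n < L) : prefixSet c n n ∈ legalSets L c n := by
  have hsub := prefixSet_self_subset (c := c) n
  refine mem_legalSets.mpr ⟨hsub, (isLegalSet_iff_isLegal_indList hL hc hc1 hsub).mpr ?_⟩
  rw [indList_prefixSet_self hc]
  exact IsLegal.short n hn

theorem prefixSet_union_mem_legalSets (hL : 1 ≤ L) (hc : ∀ r, c r ≤ 1) (hc1 : c 1 = 1)
    {m k : ℕ} (hk : k < L) (hck : c (k + 1) = 1) {S : Finset ℕ} (hS : S ∈ legalSets L c m) :
    prefixSet c (m + 1 + k) k ∪ S ∈ legalSets L c (m + 1 + k) := by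
  obtain ⟨hSm, hleg⟩ := mem_legalSets.mp hS
  have hSm' : S ⊆ Icc 1 (m + 1) := hSm.trans (Icc_subset_Icc_right m.le_succ)
  have hsub := prefixSet_union_subset (c := c) (k := k) hSm'
  refine mem_legalSets.mpr ⟨hsub, (isLegalSet_iff_isLegal_indList hL hc hc1 hsub).mpr ?_⟩
  have hm : m + 1 ∉ S := fun h => by have := mem_Icc.mp (hSm h); omega
  rw [indList_prefixSet_union hc hSm', indList_succ, if_neg hm]
  simpa [coeffPrefix] using IsLegal.long (k + 1) 0 0 _ (by omega) (by omega) (by omega)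
    ((isLegalSet_iff_isLegal_indList hL hc hc1 hSm).mp hleg)

theorem mem_legalSets_cases (hL : 1 ≤ L) (hc : ∀ r, c r ≤ 1) (hc1 : c 1 = 1) {n : ℕ}
    {S : Finset ℕ} (hS : S ∈ legalSets L c n) :
    (n < L ∧ S = prefixSet c n n) ∨
      ∃ k < min n L, c (k + 1) = 1 ∧
        ∃ S' ∈ legalSets L c (n - k - 1), S = prefixSet c n k ∪ S' := by
  obtain ⟨hsub, hleg⟩ := mem_legalSets.mp hS
  rw [isLegalSet_iff_isLegal_indList hL hc hc1 hsub] at hleg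
  rcases hleg.eq_coeffPrefix_or_exists hc (by omega) with
    ⟨hn, hl⟩ | ⟨k, hk, hck, l', hl', hl⟩
  · rw [indList_length] at hn hl
    refine Or.inl ⟨hn, indList_injOn n hsub (prefixSet_self_subset n) ?_⟩
    rw [hl, indList_prefixSet_self hc]
  · have hlen := congrArg List.length hl
    simp only [indList_length, coeffPrefix, List.length_append, List.length_map,
      List.length_range, List.length_cons] at hlen
    obtain ⟨m, rfl⟩ : ∃ m, n = m + 1 + k := ⟨l'.length, by omega⟩
    have htail : indList m S = l' := by
      rw [indList_add, indList_succ] at hl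
      have := (List.append_inj' hl (by simp only [List.length_cons, indList_length]; omega)).2
      exact (List.cons.inj this).2
    set S' := S.filter (· ≤ m)
    have hS'm : S' ⊆ Icc 1 m := fun x hx => by
      obtain ⟨hxS, hxm⟩ := mem_filter.mp hx; have := mem_Icc.mp (hsub hxS); rw [mem_Icc]; omega
    have hS'm' : S' ⊆ Icc 1 (m + 1) := hS'm.trans (Icc_subset_Icc_right m.le_succ)
    have hS'ind : indList m S' = l' := by
      rw [← htail]
      exact indList_congr fun x hx => by simp [S', (mem_Icc.mp hx).2]
    have hS' : S' ∈ legalSets L c m := mem_legalSets.mpr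
      ⟨hS'm, (isLegalSet_iff_isLegal_indList hL hc hc1 hS'm).mpr (hS'ind ▸ hl')⟩
    refine Or.inr ⟨k, by omega, hck, S', by simpa using hS',
      indList_injOn _ hsub (prefixSet_union_subset hS'm') ?_⟩
    have hm : m + 1 ∉ S' := fun h => by have := mem_Icc.mp (hS'm h); omega
    rw [hl, indList_prefixSet_union hc hS'm', indList_succ, if_neg hm, hS'ind]

theorem exists_lt_le_lt_succ {f : ℕ → ℕ} {N m : ℕ} (h0 : f 0 ≤ N) (hm : N < f m) :
    ∃ k < m, f k ≤ N ∧ N < f (k + 1) := by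
  induction m with
  | zero => omega
  | succ m ih =>
    by_cases h : f m ≤ N
    · exact ⟨m, by omega, h, hm⟩
    · obtain ⟨k, hk, hkN⟩ := ih (by omega)
      exact ⟨k, by omega, hkN⟩

theorem card_legalSets_le (hL : 1 ≤ L) (hc : ∀ r, c r ≤ 1) (hc1 : c 1 = 1) {K : ℕ → ℕ}
    (hK : IsPLRS L c K) (n : ℕ) : #(legalSets L c n) ≤ K (n + 1) := by
  induction n using Nat.strong_induction_on with
  | _ n ih =>
  classical
  have hsub : legalSets L c n ⊆ (if n < L then {prefixSet c n n} else ∅) ∪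
      (range (min n L)).biUnion fun k =>
        if c (k + 1) = 1 then (legalSets L c (n - k - 1)).image (prefixSet c n k ∪ ·)
        else ∅ := by
    intro S hS
    rcases mem_legalSets_cases hL hc hc1 hS with ⟨hn, rfl⟩ | ⟨k, hk, hck, S', hS', rfl⟩
    · simp [hn]
    · refine mem_union_right _ (mem_biUnion.mpr ⟨k, mem_range.mpr hk, ?_⟩)
      rw [if_pos hck]
      exact mem_image_of_mem _ hS'
  have hpiece (k : ℕ) (hk : k ∈ range (min n L)) :
      #(if c (k + 1) = 1 then (legalSets L c (n - k - 1)).image (prefixSet c n k ∪ ·) else ∅)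
        ≤ c (k + 1) * K (n - k) := by
    rw [mem_range, lt_min_iff] at hk
    split_ifs with hck
    · rw [hck, one_mul, show n - k = n - k - 1 + 1 by omega]
      exact card_image_le.trans (ih _ (by omega))
    · simp
  calc #(legalSets L c n)
      ≤ (if n < L then 1 else 0) + ∑ k ∈ range (min n L), c (k + 1) * K (n - k) := by
        refine (card_le_card hsub).trans ((card_union_le _ _).trans (add_le_add ?_ ?_))
        · split_ifs <;> simp
        · exact card_biUnion_le.trans (sum_le_sum hpiece)
    _ = K (n + 1) := by rw [hK, add_comm]

theorem exists_mem_legalSets_sum_eq (hL : 1 ≤ L) (hc : ∀ r, c r ≤ 1) (hc1 : c 1 = 1)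
    {K : ℕ → ℕ} (hK : IsPLRS L c K) (n : ℕ) {N : ℕ} (hN : N < K (n + 1)) :
    ∃ S ∈ legalSets L c n, ∑ x ∈ S, K x = N := by
  induction n using Nat.strong_induction_on generalizing N with
  | _ n ih =>
  rw [hK] at hN
  by_cases hNB : N < ∑ r ∈ range (min n L), c (r + 1) * K (n - r)
  · obtain ⟨k, hk, hBk, hNk⟩ :=
      exists_lt_le_lt_succ (f := fun k => ∑ r ∈ range k, c (r + 1) * K (n - r)) (by simp) hNB
    rw [lt_min_iff] at hk
    simp only [sum_range_succ] at hNk hBk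
    have hck : c (k + 1) = 1 := by
      have := hc (k + 1)
      by_contra h
      rw [show c (k + 1) = 0 by omega, zero_mul] at hNk
      omega
    obtain ⟨m, rfl⟩ : ∃ m, n = m + 1 + k := ⟨n - k - 1, by omega⟩
    rw [hck, one_mul, show m + 1 + k - k = m + 1 by omega] at hNk
    obtain ⟨S', hS', hsum⟩ :=
      ih m (by omega) (N := N - ∑ r ∈ range k, c (r + 1) * K (m + 1 + k - r)) (by omega)
    refine ⟨_, prefixSet_union_mem_legalSets hL hc hc1 hk.2 hck hS', ?_⟩
    rw [sum_prefixSet_union K hc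
      ((mem_legalSets.mp hS').1.trans (Icc_subset_Icc_right (by omega : m ≤ m + 1))), hsum]
    omega
  · have hn : n < L := by
      by_contra h
      rw [if_neg h] at hN
      omega
    rw [min_eq_left hn.le, if_pos hn] at hN
    rw [min_eq_left hn.le] at hNB
    refine ⟨prefixSet c n n, prefixSet_mem_legalSets hL hc hc1 hn, ?_⟩
    have := sum_prefixSet_union K hc (m := 0) (k := n) (empty_subset (Icc 1 0))
    rw [zero_add, union_empty, sum_empty, add_zero] at this
    omega

theorem image_sum_legalSets (hL : 1 ≤ L) (hc : ∀ r, c r ≤ 1) (hc1 : c 1 = 1) {K : ℕ → ℕ}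
    (hK : IsPLRS L c K) (n : ℕ) :
    (legalSets L c n).image (fun S => ∑ x ∈ S, K x) = range (K (n + 1)) ∧
      Set.InjOn (fun S => ∑ x ∈ S, K x) (legalSets L c n) := by
  have hcard := card_legalSets_le hL hc hc1 hK n
  have hsurj : range (K (n + 1)) ⊆ (legalSets L c n).image (fun S => ∑ x ∈ S, K x) :=
    fun N hN => mem_image.mpr (exists_mem_legalSets_sum_eq hL hc hc1 hK n (mem_range.mp hN))
  have himage := (eq_of_subset_of_card_le hsurj (card_image_le.trans (by simpa using hcard))).symm
  refine ⟨himage, card_image_iff.mp (le_antisymm card_image_le ?_)⟩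
  rwa [himage, card_range]

theorem mem_legalSets_sdiff_pred {n : ℕ} (hn : 1 ≤ n) {S : Finset ℕ} :
    S ∈ legalSets L c n \ legalSets L c (n - 1) ↔
      S ⊆ Icc 1 n ∧ n ∈ S ∧ IsLegalSet L c S := by
  simp only [mem_sdiff, mem_legalSets, not_and]
  refine ⟨fun ⟨⟨hS, hleg⟩, hnot⟩ =>
      ⟨hS, by_contra fun hnS => hnot (fun x hx => ?_) hleg, hleg⟩,
    fun ⟨hS, hnS, hleg⟩ => ⟨⟨hS, hleg⟩, fun h _ => by have := mem_Icc.mp (h hnS); omega⟩⟩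
  have := mem_Icc.mp (hS hx)
  have : x ≠ n := fun h => hnS (h ▸ hx)
  rw [mem_Icc]
  omega

theorem card_legalSets (hL : 1 ≤ L) (hc : ∀ r, c r ≤ 1) (hc1 : c 1 = 1) {K : ℕ → ℕ}
    (hK : IsPLRS L c K) (n : ℕ) : #(legalSets L c n) = K (n + 1) := by
  obtain ⟨himage, hinj⟩ := image_sum_legalSets hL hc hc1 hK n
  rw [← card_image_of_injOn hinj, himage, card_range]

theorem card_legalSets_sdiff_pred (hL : 1 ≤ L) (hc : ∀ r, c r ≤ 1) (hc1 : c 1 = 1)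
    {K : ℕ → ℕ} (hK : IsPLRS L c K) {n : ℕ} (hn : 1 ≤ n) :
    (#(legalSets L c n \ legalSets L c (n - 1)) : ℤ) = K (n + 1) - K n := by
  have hsub := legalSets_mono (L := L) (c := c) (Nat.sub_le n 1)
  rw [card_sdiff_of_subset hsub, Nat.cast_sub (card_le_card hsub), card_legalSets hL hc hc1 hK,
    card_legalSets hL hc hc1 hK, Nat.sub_add_cancel hn]

theorem image_sum_legalSets_sdiff_pred (hL : 1 ≤ L) (hc : ∀ r, c r ≤ 1) (hc1 : c 1 = 1)
    {K : ℕ → ℕ} (hK : IsPLRS L c K) {n : ℕ} (hn : 1 ≤ n) :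
    (legalSets L c n \ legalSets L c (n - 1)).image (fun S => ∑ x ∈ S, K x) =
      Ico (K n) (K (n + 1)) := by
  obtain ⟨himage, hinj⟩ := image_sum_legalSets hL hc hc1 hK n
  rw [image_sdiff_of_injOn hinj (legalSets_mono (Nat.sub_le n 1)), himage,
    (image_sum_legalSets hL hc hc1 hK (n - 1)).1, Nat.sub_add_cancel hn]
  ext N
  simp only [mem_sdiff, mem_range, mem_Ico]
  omega

theorem kanC_le_one (g ℓ r : ℕ) : kanC g ℓ r ≤ 1 := by
  unfold kanC
  split_ifs <;> simp

theorem kanC_one (g ℓ : ℕ) : kanC g ℓ 1 = 1 :=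
  if_pos ⟨le_rfl, Nat.le_add_left 1 _, rfl⟩

theorem sum_Icc_one_eq_sum_range {M : Type*} [AddCommMonoid M] (f : ℕ → M) (m : ℕ) :
    ∑ r ∈ Icc 1 m, f r = ∑ r ∈ range m, f (r + 1) := by
  rw [range_eq_Ico, sum_Ico_add', zero_add, Ico_add_one_right_eq_Icc]

theorem nonempty_and_sup_id_eq_iff {S : Finset ℕ} (hS : ∀ x ∈ S, 1 ≤ x) {i : ℕ} :
    S.Nonempty ∧ S.sup id = i ↔ S ⊆ Icc 1 i ∧ i ∈ S := by
  constructor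
  · rintro ⟨hne, rfl⟩
    obtain ⟨t, ht, htop⟩ := S.exists_mem_eq_sup hne id
    exact ⟨fun x hx => mem_Icc.mpr ⟨hS x hx, le_sup (f := id) hx⟩, htop ▸ ht⟩
  · rintro ⟨hsub, hi⟩
    exact ⟨⟨i, hi⟩, le_antisymm (Finset.sup_le fun x hx => (mem_Icc.mp (hsub hx)).2)
      (le_sup (f := id) hi)⟩

theorem isPLRS_kanC {g ℓ : ℕ} {K : ℕ → ℕ} (hK1 : K 1 = 1)
    (hKsmall : ∀ n, 1 ≤ n → n < ℓ * g + 1 →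
      K (n + 1) = (∑ r ∈ Icc 1 n, kanC g ℓ r * K (n + 1 - r)) + 1)
    (hKrec : ∀ n, ℓ * g + 1 ≤ n →
      K (n + 1) = ∑ r ∈ Icc 1 (ℓ * g + 1), kanC g ℓ r * K (n + 1 - r)) :
    IsPLRS (ℓ * g + 1) (kanC g ℓ) K := by
  intro n
  rcases Nat.eq_zero_or_pos n with rfl | hn
  · simp [hK1]
  by_cases hnL : n < ℓ * g + 1
  · rw [hKsmall n hn hnL, min_eq_left hnL.le, if_pos hnL, sum_Icc_one_eq_sum_range]
    simp
  · rw [hKrec n (by omega), min_eq_right (by omega), if_neg hnL, sum_Icc_one_eq_sum_range]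
    simp

theorem kangaroo_count_with_top_general (g ℓ : ℕ)
    (K : ℕ → ℕ) (hK1 : K 1 = 1)
    (hKsmall : ∀ n, 1 ≤ n → n < ℓ * g + 1 →
      K (n + 1) = (∑ r ∈ Finset.Icc 1 n, kanC g ℓ r * K (n + 1 - r)) + 1)
    (hKrec : ∀ n, ℓ * g + 1 ≤ n →
      K (n + 1) = ∑ r ∈ Finset.Icc 1 (ℓ * g + 1), kanC g ℓ r * K (n + 1 - r))
    (i : ℕ) (hi : 1 ≤ i) :
    ({S : Finset ℕ | S ⊆ Finset.Icc 1 i ∧ i ∈ S ∧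
        IsLegalSet (ℓ * g + 1) (kanC g ℓ) S}.ncard : ℤ) = (K (i + 1) : ℤ) - K i ∧
    {N : ℕ | ∃ S : Finset ℕ, IsLegalSet (ℓ * g + 1) (kanC g ℓ) S ∧ S.Nonempty ∧
        S.sup id = i ∧ N = ∑ r ∈ S, K r} = Set.Ico (K i) (K (i + 1)) := by
  have hL : 1 ≤ ℓ * g + 1 := Nat.le_add_left 1 _
  have hK := isPLRS_kanC hK1 hKsmall hKrec
  set A := legalSets (ℓ * g + 1) (kanC g ℓ) i \ legalSets (ℓ * g + 1) (kanC g ℓ) (i - 1)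
  have hA :
      {S : Finset ℕ | S ⊆ Icc 1 i ∧ i ∈ S ∧ IsLegalSet (ℓ * g + 1) (kanC g ℓ) S} = A := by
    ext S
    exact (mem_legalSets_sdiff_pred hi).symm
  constructor
  · rw [hA, Set.ncard_coe_finset]
    exact card_legalSets_sdiff_pred hL (kanC_le_one g ℓ) (kanC_one g ℓ) hK hi
  · rw [← coe_Ico,
      ← image_sum_legalSets_sdiff_pred hL (kanC_le_one g ℓ) (kanC_one g ℓ) hK hi, coe_image, ← hA]
    ext N
    constructor
    · rintro ⟨S, hleg, hne, hsup, rfl⟩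
      obtain ⟨hsub, hiS⟩ := (nonempty_and_sup_id_eq_iff hleg.1).mp ⟨hne, hsup⟩
      exact ⟨S, ⟨hsub, hiS, hleg⟩, rfl⟩
    · rintro ⟨S, ⟨hsub, hiS, hleg⟩, rfl⟩
      obtain ⟨hne, hsup⟩ := (nonempty_and_sup_id_eq_iff hleg.1).mpr ⟨hsub, hiS⟩
      exact ⟨S, hleg, hne, hsup, rfl⟩

/-- For a Kangaroo recurrence `{K_n}` with `ℓ` hops of length `g`
and any `i ≥ 1`, the number of legal index sets `S ⊆ {1, …, i}` with `i ∈ S`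
equals `K_{i+1} - K_i`; equivalently, the positive integers whose legal decomposition
has largest summand `K_i` are exactly the integers in `[K_i, K_{i+1})`. -/
theorem kangaroo_count_with_top (g ℓ : ℕ) (hg : 1 ≤ g) (hℓ : 1 ≤ ℓ)
    (K : ℕ → ℕ) (hK1 : K 1 = 1)
    (hKsmall : ∀ n, 1 ≤ n → n < ℓ * g + 1 →
      K (n + 1) = (∑ r ∈ Finset.Icc 1 n, kanC g ℓ r * K (n + 1 - r)) + 1)
    (hKrec : ∀ n, ℓ * g + 1 ≤ n →
      K (n + 1) = ∑ r ∈ Finset.Icc 1 (ℓ * g + 1), kanC g ℓ r * K (n + 1 - r))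
    (i : ℕ) (hi : 1 ≤ i) :
    ({S : Finset ℕ | S ⊆ Finset.Icc 1 i ∧ i ∈ S ∧
        IsLegalSet (ℓ * g + 1) (kanC g ℓ) S}.ncard : ℤ) = (K (i + 1) : ℤ) - K i ∧
    {N : ℕ | ∃ S : Finset ℕ, IsLegalSet (ℓ * g + 1) (kanC g ℓ) S ∧ S.Nonempty ∧
        S.sup id = i ∧ N = ∑ r ∈ S, K r} = Set.Ico (K i) (K (i + 1)) :=
  kangaroo_count_with_top_general g ℓ K hK1 hKsmall hKrec i hi
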